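/- Let k be an even positive integer and let G be a finite (s,k)-edge-connected graph in which deg(s) is even. Then the lifting graph L(G, s, k) is a complete multipartite graph; in particular its complement is disconnected (provided deg(s) ≥ 2). -/

import Mathlib

universe u v

/-- A loopless multigraph on vertex type `V` with edge type `E`:
each edge `e` has two distinct endpoints `fst e` and `snd e`. -/
structure Multigraph (V : Type u) (E : Type v) where
  fst : E → V
  snd : E → V
  loopless : ∀ e, fst e ≠ snd e

namespace Multigraph

variable {V : Type u} {E : Type v}

/-- The edge `e` has endpoints `a` and `b`. -/
def Inc (G : Multigraph V E) (e : E) (a b : V) : Prop :=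
  (G.fst e = a ∧ G.snd e = b) ∨ (G.fst e = b ∧ G.snd e = a)

/-- The edge `e` is incident with the vertex `s`. -/
def IncVert (G : Multigraph V E) (s : V) (e : E) : Prop :=
  G.fst e = s ∨ G.snd e = s

/-- The degree of a vertex: the number of edges incident with it. -/
noncomputable def degree (G : Multigraph V E) (s : V) : ℕ :=
  {e : E | G.IncVert s e}.ncard

/-- A graph is locally finite if every vertex is incident with only finitely many edges. -/
def LocallyFinite (G : Multigraph V E) : Prop :=
  ∀ s : V, {e : E | G.IncVert s e}.Finite

/-- `δ(S)`: the set of edges with exactly one endpoint in `S`. -/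
def edgeCut (G : Multigraph V E) (S : Set V) : Set E :=
  {e : E | (G.fst e ∈ S ∧ G.snd e ∉ S) ∨ (G.fst e ∉ S ∧ G.snd e ∈ S)}

open Classical in
/-- The endpoint of `e` other than `s` (for `e` incident with `s`). -/
noncomputable def other (G : Multigraph V E) (s : V) (e : E) : V :=
  if G.fst e = s then G.snd e else G.fst e

open Classical in
/-- For an edge of `δ(S)`, its endpoint outside `S`. -/
noncomputable def outEnd (G : Multigraph V E) (S : Set V) (e : E) : V :=
  if G.fst e ∈ S then G.snd e else G.fst e

/-- Walks in a multigraph. -/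
inductive Walk (G : Multigraph V E) : V → V → Type (max u v)
  | nil (x : V) : Walk G x x
  | cons {x y z : V} (e : E) (h : G.Inc e x y) (p : Walk G y z) : Walk G x z

namespace Walk

variable {G : Multigraph V E}

/-- The list of edges used by a walk. -/
def edges : ∀ {x y : V}, G.Walk x y → List E
  | _, _, .nil _ => []
  | _, _, .cons e _ p => e :: edges p

/-- The list of vertices visited by a walk. -/
def support : ∀ {x y : V}, G.Walk x y → List V
  | _, y, .nil _ => [y]
  | x, _, .cons _ _ p => x :: support p

/-- A walk is a path if it has no repeated vertices. -/
def IsPath {x y : V} (p : G.Walk x y) : Prop := p.support.Nodup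

end Walk

/-- There are `k` pairwise edge-disjoint paths from `x` to `y`. -/
def EdgeDisjointPaths (G : Multigraph V E) (k : ℕ) (x y : V) : Prop :=
  ∃ P : Fin k → G.Walk x y,
    (∀ i, (P i).IsPath) ∧ ∀ i j, i ≠ j → List.Disjoint (P i).edges (P j).edges

/-- `G` is `k`-edge-connected: between any two distinct vertices there are `k`
pairwise edge-disjoint paths. -/
def EdgeConnected (G : Multigraph V E) (k : ℕ) : Prop :=
  ∀ x y : V, x ≠ y → G.EdgeDisjointPaths k x y

/-- `G` is `(s,k)`-edge-connected: between any two distinct vertices different from `s`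
there are `k` pairwise edge-disjoint paths (possibly through `s`). -/
def SEdgeConnected (G : Multigraph V E) (s : V) (k : ℕ) : Prop :=
  ∀ x y : V, x ≠ s → y ≠ s → x ≠ y → G.EdgeDisjointPaths k x y

/-- An orientation of `G` assigns to each edge a tail and a head (its two endpoints). -/
structure Orientation (G : Multigraph V E) where
  tail : E → V
  head : E → V
  inc : ∀ e, G.Inc e (tail e) (head e)

namespace Orientation

variable {G : Multigraph V E}

/-- Directed walks with respect to an orientation. -/
inductive DiWalk (o : G.Orientation) : V → V → Type (max u v)
  | nil (x : V) : DiWalk o x x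
  | cons {x y z : V} (e : E) (ht : o.tail e = x) (hh : o.head e = y) (p : DiWalk o y z) :
      DiWalk o x z

namespace DiWalk

variable {o : G.Orientation}

/-- The list of arcs used by a directed walk. -/
def edges : ∀ {x y : V}, o.DiWalk x y → List E
  | _, _, .nil _ => []
  | _, _, .cons e _ _ p => e :: edges p

/-- The list of vertices visited by a directed walk. -/
def support : ∀ {x y : V}, o.DiWalk x y → List V
  | _, y, .nil _ => [y]
  | x, _, .cons _ _ _ p => x :: support p

/-- A directed walk is a directed path if it has no repeated vertices. -/
def IsPath {x y : V} (p : o.DiWalk x y) : Prop := p.support.Nodup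

end DiWalk

/-- An orientation is `k`-arc-connected if from any vertex to any other there are `k`
pairwise arc-disjoint directed paths. -/
def ArcConnected (o : G.Orientation) (k : ℕ) : Prop :=
  ∀ x y : V, ∃ P : Fin k → o.DiWalk x y,
    (∀ i, (P i).IsPath) ∧ ∀ i j, i ≠ j → List.Disjoint (P i).edges (P j).edges

end Orientation

/-- A ray: a one-way infinite path. -/
structure Ray (G : Multigraph V E) where
  vert : ℕ → V
  edge : ℕ → E
  inc : ∀ n, G.Inc (edge n) (vert n) (vert (n + 1))
  inj : Function.Injective vert

/-- Two rays are edge-disjoint. -/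
def Ray.EdgeDisjoint {G : Multigraph V E} (R R' : G.Ray) : Prop :=
  ∀ m n, R.edge m ≠ R'.edge n

/-- A walk is edge-disjoint from a ray. -/
def Walk.EdgeDisjointRay {G : Multigraph V E} {x y : V} (p : G.Walk x y) (R : G.Ray) : Prop :=
  ∀ e ∈ p.edges, ∀ n, R.edge n ≠ e

/-- Two rays are equivalent (belong to the same end) if there are infinitely many
pairwise vertex-disjoint paths between them. -/
def RayEquiv (G : Multigraph V E) (R R' : G.Ray) : Prop :=
  ∃ P : ℕ → (Σ (m n : ℕ), G.Walk (R.vert m) (R'.vert n)),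
    (∀ i, (P i).2.2.IsPath) ∧
      ∀ i j, i ≠ j → List.Disjoint (P i).2.2.support (P j).2.2.support

/-- A graph is one-ended if it has a ray and any two rays are equivalent. -/
def OneEnded (G : Multigraph V E) : Prop :=
  Nonempty G.Ray ∧ ∀ R R' : G.Ray, G.RayEquiv R R'

end Multigraph
/-- A multigraph on the vertex type `W`, with its edge type bundled. -/
structure GraphOn (W : Type u) : Type (u + 1) where
  E : Type u
  graph : Multigraph W E

namespace Multigraph

variable {W F : Type u}

/-- The graph obtained from `G` by lifting the pair of edges `e₁, e₂` at `s`: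
delete `e₁` and `e₂`, and add an edge between their non-`s` endpoints if these differ
(nothing is added if they coincide). -/
noncomputable def lift (G : Multigraph W F) (s : W) (e₁ e₂ : F) : GraphOn W where
  E := {e : F // e ≠ e₁ ∧ e ≠ e₂} ⊕ {_p : PUnit.{u + 1} // G.other s e₁ ≠ G.other s e₂}
  graph :=
    { fst := Sum.elim (fun e => G.fst e.1) fun _ => G.other s e₁
      snd := Sum.elim (fun e => G.snd e.1) fun _ => G.other s e₂
      loopless := by
        rintro (e | p)
        · exact G.loopless e.1
        · exact p.2 }

/-- The pair of edges `e₁, e₂` incident with `s` is `k`-liftable: after lifting it,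
there are `k` pairwise edge-disjoint paths between any two vertices different from `s`. -/
def IsLiftable (G : Multigraph W F) (s : W) (k : ℕ) (e₁ e₂ : F) : Prop :=
  e₁ ≠ e₂ ∧ G.IncVert s e₁ ∧ G.IncVert s e₂ ∧ (G.lift s e₁ e₂).graph.SEdgeConnected s k

/-- The `k`-lifting graph `L(G, s, k)`: vertices are the edges of `G` incident with `s`,
two being adjacent iff they form a `k`-liftable pair. -/
noncomputable def liftingGraph (G : Multigraph W F) (s : W) (k : ℕ) :
    SimpleGraph {e : F // G.IncVert s e} :=
  SimpleGraph.fromRel fun e f => G.IsLiftable s k e.1 f.1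

end Multigraph

/-- `x` is an isolated vertex of the simple graph `L`. -/
def SimpleGraph.IsIsolatedVertex {α : Type*} (L : SimpleGraph α) (x : α) : Prop :=
  ∀ y, ¬ L.Adj x y

/-- `L` is the union of an isolated vertex and a balanced complete bipartite graph. -/
def SimpleGraph.IsIsolatedPlusBalancedCompleteBipartite {α : Type*} (L : SimpleGraph α) : Prop :=
  ∃ (x : α) (A B : Set α),
    x ∉ A ∧ x ∉ B ∧ A ∩ B = ∅ ∧ A ∪ B = {x}ᶜ ∧ A.ncard = B.ncard ∧
      ∀ a b, L.Adj a b ↔ (a ∈ A ∧ b ∈ B) ∨ (a ∈ B ∧ b ∈ A)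

/-!
A pair `e₁, e₂` of edges at `s` is not liftable exactly when some dangerous set, a set
`X ⊆ V - s` with `d(X) ≤ k + 1` and a vertex other than `s` outside it, contains the far ends
of both: lifting lowers `d(X)` by two when both far ends lie in `X` and leaves it unchanged
otherwise, and by Menger's theorem `(s,k)`-edge-connectivity is the cut condition `d(X) ≥ k`.

Two dangerous sets `X`, `Y` sharing a neighbour of `s` have a dangerous union. Posimodularity,
`d(X) + d(Y) ≥ d(X \ Y) + d(Y \ X) + 2`, forces `d(X) = d(Y) = k + 1` and `d(X \ Y) = k`; then
`d(X ∩ Y)` is odd, and by submodularity so is `d(X ∪ Y) ≤ k + 2`. As `k` is even,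
`d(X ∪ Y) ≤ k + 1`, and as `d(V - s) = deg(s)` is even, `X ∪ Y ≠ V - s`. So non-liftability is
transitive and `L(G, s, k)` is complete multipartite. If no pair were liftable, a largest
dangerous set would contain every neighbour of `s`, and adding `s` to it would leave a cut of
size `d(X) - deg(s) < k`.
-/

theorem Set.ncard_eq_sum_ite {α : Type*} [Fintype α] (s : Set α) [DecidablePred (· ∈ s)] :
    s.ncard = ∑ a, if a ∈ s then 1 else 0 := by
  rw [Set.ncard_eq_toFinset_card', Finset.sum_boole]
  simp

namespace SimpleGraph.IsCompleteMultipartite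

variable {α : Type u} {G : SimpleGraph α}

theorem exists_adj_iff_ne (h : G.IsCompleteMultipartite) :
    ∃ (ι : Type u) (c : α → ι), ∀ a b, G.Adj a b ↔ c a ≠ c b :=
  ⟨Quotient h.setoid, Quotient.mk _, fun _ _ => by rw [Ne, Quotient.eq]; exact not_not.symm⟩

theorem not_connected_compl (h : G.IsCompleteMultipartite) (hG : ∃ a b, G.Adj a b) :
    ¬ Gᶜ.Connected := by
  obtain ⟨a, b, hab⟩ := hG
  rintro hc
  obtain ⟨p⟩ := hc.preconnected a b
  suffices ∀ {u v : α}, Gᶜ.Walk u v → ¬ G.Adj u v from this p hab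
  intro u v p
  induction p with
  | nil => exact G.loopless.irrefl _
  | cons huv _ ih => exact h.trans _ _ _ ((G.compl_adj _ _).1 huv).2 ih

end SimpleGraph.IsCompleteMultipartite

namespace Multigraph

section General

variable {V : Type u} {E : Type v} {G : Multigraph V E} {s a b x y : V} {e : E} {S : Set V}
  {k : ℕ}

theorem Inc.symm (h : G.Inc e a b) : G.Inc e b a :=
  Or.symm h

theorem Inc.incVert (h : G.Inc e a b) : G.IncVert a e := by
  rcases h with ⟨h, -⟩ | ⟨-, h⟩ <;> simp [IncVert, h]

theorem Inc.ne (h : G.Inc e a b) : a ≠ b := by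
  rcases h with ⟨rfl, rfl⟩ | ⟨rfl, rfl⟩
  exacts [G.loopless e, (G.loopless e).symm]

theorem inc_other (h : G.IncVert s e) : G.Inc e s (G.other s e) := by
  unfold other
  by_cases hf : G.fst e = s
  · simp [Inc, hf]
  · simp [Inc, hf, h.resolve_left hf]

theorem other_ne (h : G.IncVert s e) : G.other s e ≠ s :=
  (inc_other h).ne.symm

theorem mem_edgeCut_iff : e ∈ G.edgeCut S ↔ ∃ a b, G.Inc e a b ∧ a ∈ S ∧ b ∉ S := by
  constructor
  · rintro (⟨h₁, h₂⟩ | ⟨h₁, h₂⟩)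
    exacts [⟨_, _, Or.inl ⟨rfl, rfl⟩, h₁, h₂⟩, ⟨_, _, Or.inr ⟨rfl, rfl⟩, h₂, h₁⟩]
  · rintro ⟨a, b, ⟨rfl, rfl⟩ | ⟨rfl, rfl⟩, ha, hb⟩
    exacts [Or.inl ⟨ha, hb⟩, Or.inr ⟨hb, ha⟩]

theorem Inc.mem_edgeCut (h : G.Inc e a b) (ha : a ∈ S) (hb : b ∉ S) : e ∈ G.edgeCut S :=
  mem_edgeCut_iff.2 ⟨a, b, h, ha, hb⟩

theorem Inc.mem_edgeCut_iff (h : G.Inc e a b) (hb : b ∉ S) : e ∈ G.edgeCut S ↔ a ∈ S := by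
  have := h.ne
  rcases h with ⟨rfl, rfl⟩ | ⟨rfl, rfl⟩ <;> simp [edgeCut, hb]

theorem edgeCut_compl (S : Set V) : G.edgeCut Sᶜ = G.edgeCut S := by
  ext e
  simp only [edgeCut, Set.mem_ofPred_eq, Set.mem_compl_iff, not_not]
  tauto

@[simp]
theorem edgeCut_empty : G.edgeCut ∅ = ∅ := by
  simp [edgeCut]

theorem edgeCut_singleton (s : V) : G.edgeCut {s} = {e | G.IncVert s e} := by
  ext e
  have := G.loopless e
  simp only [edgeCut, IncVert, Set.mem_ofPred_eq, Set.mem_singleton_iff]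
  constructor
  · tauto
  · rintro (h | h) <;> simp_all [eq_comm]

namespace Walk

def darts : ∀ {x y : V}, G.Walk x y → List (V × E × V)
  | _, _, .nil _ => []
  | x, _, .cons (y := y) e _ p => (x, e, y) :: darts p

theorem edges_eq_map_darts : ∀ {x y : V} (w : G.Walk x y), w.edges = w.darts.map (·.2.1)
  | _, _, .nil _ => rfl
  | _, _, .cons _ _ p => by simp [edges, darts, edges_eq_map_darts p]

theorem exists_mem_darts_of_mem_edges (w : G.Walk x y) (he : e ∈ w.edges) :
    ∃ a b, (a, e, b) ∈ w.darts := by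
  rw [edges_eq_map_darts, List.mem_map] at he
  obtain ⟨⟨a, e, b⟩, hd, rfl⟩ := he
  exact ⟨a, b, hd⟩

theorem start_mem_support : ∀ {x y : V} (w : G.Walk x y), x ∈ w.support
  | _, _, .nil _ => List.mem_singleton_self _
  | _, _, .cons _ _ _ => List.mem_cons_self

theorem endpoints_mem_support_of_mem_edges :
    ∀ {x y : V} (w : G.Walk x y), e ∈ w.edges → G.fst e ∈ w.support ∧ G.snd e ∈ w.support
  | _, _, .nil _, he => absurd he List.not_mem_nil
  | _, _, .cons e' h p, he => by
    simp only [edges, List.mem_cons] at he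
    simp only [support, List.mem_cons]
    rcases he with rfl | he
    · rcases h with ⟨h₁, h₂⟩ | ⟨h₁, h₂⟩
      · exact ⟨.inl h₁, .inr (h₂ ▸ p.start_mem_support)⟩
      · exact ⟨.inr (h₁ ▸ p.start_mem_support), .inl h₂⟩
    · exact (endpoints_mem_support_of_mem_edges p he).imp .inr .inr

theorem IsPath.edges_nodup : ∀ {x y : V} {w : G.Walk x y}, w.IsPath → w.edges.Nodup
  | _, _, .nil _, _ => List.nodup_nil
  | _, _, .cons e h p, hw => by
    rw [IsPath, support, List.nodup_cons] at hw
    refine List.nodup_cons.2 ⟨fun he => hw.1 ?_, IsPath.edges_nodup hw.2⟩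
    have := endpoints_mem_support_of_mem_edges p he
    rcases h.incVert with h' | h' <;> rw [← h']
    exacts [this.1, this.2]

theorem exists_mem_edges_mem_edgeCut :
    ∀ {x y : V} (w : G.Walk x y), x ∈ S → y ∉ S → ∃ e ∈ w.edges, e ∈ G.edgeCut S
  | _, _, .nil _, hx, hy => absurd hx hy
  | _, _, .cons (y := b) e h p, hx, hy => by
    by_cases hb : b ∈ S
    · obtain ⟨e', he', hc⟩ := exists_mem_edges_mem_edgeCut p hb hy
      exact ⟨e', List.mem_cons_of_mem _ he', hc⟩
    · exact ⟨e, List.mem_cons_self, h.mem_edgeCut hx hb⟩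

theorem exists_suffix : ∀ {x y : V} (w : G.Walk x y), a ∈ w.support →
    ∃ q : G.Walk a y, q.support <:+ w.support ∧ q.darts ⊆ w.darts
  | _, _, .nil _, ha => by
    obtain rfl := List.mem_singleton.1 ha
    exact ⟨.nil _, List.suffix_refl _, List.Subset.refl _⟩
  | x, _, .cons e h p, ha => by
    by_cases hax : a = x
    · subst hax
      exact ⟨.cons e h p, List.suffix_refl _, List.Subset.refl _⟩
    · obtain ⟨q, hs, hd⟩ := exists_suffix p ((List.mem_cons.1 ha).resolve_left hax)
      exact ⟨q, hs.trans (List.suffix_cons _ _), List.Subset.trans hd (List.subset_cons_self _ _)⟩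

theorem exists_isPath_darts_subset : ∀ {x y : V} (w : G.Walk x y),
    ∃ p : G.Walk x y, p.IsPath ∧ p.darts ⊆ w.darts
  | _, _, .nil _ => ⟨.nil _, List.nodup_singleton _, List.Subset.refl _⟩
  | x, _, .cons e h w => by
    obtain ⟨p, hp, hpw⟩ := exists_isPath_darts_subset w
    by_cases hx : x ∈ p.support
    · obtain ⟨q, hs, hq⟩ := exists_suffix p hx
      exact ⟨q, hp.sublist hs.sublist,
        List.Subset.trans hq (List.Subset.trans hpw (List.subset_cons_self _ _))⟩
    · exact ⟨.cons e h p, List.nodup_cons.2 ⟨hx, hp⟩, List.cons_subset_cons _ hpw⟩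

theorem exists_isPath_of_reflTransGen {P : V → E → V → Prop}
    (h : Relation.ReflTransGen (fun a b => ∃ e, G.Inc e a b ∧ P a e b) x y) :
    ∃ p : G.Walk x y, p.IsPath ∧ ∀ d ∈ p.darts, P d.1 d.2.1 d.2.2 := by
  suffices ∃ w : G.Walk x y, ∀ d ∈ w.darts, P d.1 d.2.1 d.2.2 by
    obtain ⟨w, hw⟩ := this
    obtain ⟨p, hp, hpw⟩ := exists_isPath_darts_subset w
    exact ⟨p, hp, fun d hd => hw d (hpw hd)⟩
  induction h using Relation.ReflTransGen.head_induction_on with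
  | refl => exact ⟨.nil _, by simp [darts]⟩
  | head hab _ ih =>
    obtain ⟨e, he, hP⟩ := hab
    obtain ⟨w, hw⟩ := ih
    refine ⟨.cons e he w, ?_⟩
    simp only [darts, List.forall_mem_cons]
    exact ⟨hP, hw⟩

end Walk

theorem EdgeDisjointPaths.le_ncard_edgeCut [Finite E] (h : G.EdgeDisjointPaths k x y)
    (hx : x ∈ S) (hy : y ∉ S) : k ≤ (G.edgeCut S).ncard := by
  obtain ⟨P, -, hP⟩ := h
  choose c hc hcut using fun i => (P i).exists_mem_edges_mem_edgeCut hx hy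
  have hinj : Function.Injective fun i => (⟨c i, hcut i⟩ : G.edgeCut S) := fun i j hij =>
    by_contra fun hne => hP i j hne (hc i) (Subtype.mk.inj hij ▸ hc j)
  simpa using Nat.card_le_card_of_injective _ hinj

open Classical in
noncomputable def cutSign (G : Multigraph V E) (S : Set V) (e : E) : ℤ :=
  (if G.fst e ∈ S then 1 else 0) - (if G.snd e ∈ S then 1 else 0)

open Classical in
/-- The change of `f e` when one unit of flow is pushed along `e` away from `a`. -/
noncomputable def orient (G : Multigraph V E) (e : E) (a : V) : ℤ :=
  if G.fst e = a then 1 else -1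

theorem orient_eq_one_or_neg_one (e : E) (a : V) : G.orient e a = 1 ∨ G.orient e a = -1 := by
  unfold orient
  split_ifs <;> simp

theorem orient_ne_zero (e : E) (a : V) : G.orient e a ≠ 0 := by
  rcases orient_eq_one_or_neg_one (G := G) e a with h | h <;> simp [h]

open Classical in
theorem cutSign_mul_orient (h : G.Inc e a b) :
    G.cutSign S e * G.orient e a = (if a ∈ S then 1 else 0) - (if b ∈ S then 1 else 0) := by
  have := h.ne
  rcases h with ⟨rfl, rfl⟩ | ⟨rfl, rfl⟩ <;> simp [cutSign, orient, this.symm]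

theorem cutSign_of_inc (h : G.Inc e a b) (ha : a ∈ S) (hb : b ∉ S) :
    G.cutSign S e = G.orient e a := by
  have := h.ne
  rcases h with ⟨rfl, rfl⟩ | ⟨rfl, rfl⟩ <;> simp [cutSign, orient, ha, hb, this.symm]

theorem cutSign_of_notMem_edgeCut (h : e ∉ G.edgeCut S) : G.cutSign S e = 0 := by
  simp only [edgeCut, Set.mem_ofPred_eq, not_or, not_and_or, not_not] at h
  unfold cutSign
  split_ifs <;> tauto

namespace Walk

open Classical in
noncomputable def augment (c : ℤ) : ∀ {x y : V}, G.Walk x y → (E → ℤ) → E → ℤ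
  | _, _, .nil _, f => f
  | x, _, .cons e _ p, f => Function.update (p.augment c f) e (p.augment c f e + c * G.orient e x)

theorem augment_apply_of_notMem_edges (c : ℤ) :
    ∀ {x y : V} (w : G.Walk x y) (f : E → ℤ), e ∉ w.edges → w.augment c f e = f e
  | _, _, .nil _, _, _ => rfl
  | _, _, .cons e' _ p, f, he => by
    classical
    rw [edges, List.mem_cons, not_or] at he
    rw [augment, Function.update_of_ne he.1, augment_apply_of_notMem_edges c p f he.2]

theorem augment_apply_of_mem_darts (c : ℤ) :
    ∀ {x y : V} (w : G.Walk x y) (f : E → ℤ), w.edges.Nodup → (a, e, b) ∈ w.darts →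
      w.augment c f e = f e + c * G.orient e a
  | _, _, .nil _, _, _, hd => absurd hd List.not_mem_nil
  | _, _, .cons e' _ p, f, hw, hd => by
    classical
    rw [edges, List.nodup_cons] at hw
    simp only [darts, List.mem_cons, Prod.mk.injEq] at hd
    rcases hd with ⟨rfl, rfl, rfl⟩ | hd
    · rw [augment, Function.update_self, augment_apply_of_notMem_edges c p f hw.1]
    · have he : e ∈ p.edges := by
        rw [edges_eq_map_darts]
        exact List.mem_map_of_mem hd
      rw [augment, Function.update_of_ne (ne_of_mem_of_not_mem he hw.1),
        augment_apply_of_mem_darts c p f hw.2 hd]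

open Classical in
theorem IsPath.augment_neg_one_apply {w : G.Walk x y} (hw : w.IsPath) {f : E → ℤ}
    (hf : ∀ d ∈ w.darts, f d.2.1 = G.orient d.2.1 d.1) (e : E) :
    w.augment (-1) f e = if e ∈ w.edges then 0 else f e := by
  split_ifs with he
  · obtain ⟨a, b, hd⟩ := w.exists_mem_darts_of_mem_edges he
    rw [w.augment_apply_of_mem_darts _ f hw.edges_nodup hd, hf _ hd]
    ring
  · exact w.augment_apply_of_notMem_edges _ f he

end Walk

section Flow

variable [Fintype E] {f : E → ℤ}

/-- The net flow out of `S`, where `f e > 0` is flow from `fst e` to `snd e`. -/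
noncomputable def flowOut (G : Multigraph V E) (f : E → ℤ) (S : Set V) : ℤ :=
  ∑ e, G.cutSign S e * f e

def IsUnitFlow (G : Multigraph V E) (x y : V) (f : E → ℤ) : Prop :=
  (∀ e, |f e| ≤ 1) ∧ ∀ v, v ≠ x → v ≠ y → G.flowOut f {v} = 0

theorem flowOut_update [DecidableEq E] (f : E → ℤ) (e : E) (t : ℤ) (S : Set V) :
    G.flowOut (Function.update f e t) S = G.flowOut f S + G.cutSign S e * (t - f e) := by
  have : Function.update f e t = fun e' => f e' + if e' = e then t - f e else 0 := by
    ext e'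
    by_cases h : e' = e <;> simp [h]
  simp [flowOut, this, mul_add, Finset.sum_add_distrib]

open Classical in
theorem sum_flowOut_singleton [Fintype V] (f : E → ℤ) :
    ∑ v with v ∈ S, G.flowOut f {v} = G.flowOut f S := by
  simp only [flowOut, cutSign, Set.mem_singleton_iff]
  rw [Finset.sum_comm]
  refine Finset.sum_congr rfl fun e _ => ?_
  simp [← Finset.sum_mul, Finset.sum_sub_distrib]

open Classical in
theorem Walk.flowOut_augment (c : ℤ) :
    ∀ {x y : V} (w : G.Walk x y) (f : E → ℤ), G.flowOut (w.augment c f) S =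
      G.flowOut f S + c * ((if x ∈ S then 1 else 0) - (if y ∈ S then 1 else 0))
  | _, _, .nil _, f => by simp [augment]
  | _, _, .cons e h p, f => by
    rw [augment, flowOut_update, flowOut_augment c p, add_sub_cancel_left, mul_left_comm,
      cutSign_mul_orient h]
    ring

theorem IsUnitFlow.augment (hf : G.IsUnitFlow x y f) (c : ℤ) {p : G.Walk x y} (hp : p.IsPath)
    (hc : ∀ d ∈ p.darts, |f d.2.1 + c * G.orient d.2.1 d.1| ≤ 1) :
    G.IsUnitFlow x y (p.augment c f) := by
  refine ⟨fun e => ?_, fun v hx hy => ?_⟩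
  · by_cases he : e ∈ p.edges
    · obtain ⟨a, b, hd⟩ := p.exists_mem_darts_of_mem_edges he
      rw [p.augment_apply_of_mem_darts c f hp.edges_nodup hd]
      exact hc _ hd
    · rw [p.augment_apply_of_notMem_edges c f he]
      exact hf.1 e
  · rw [Walk.flowOut_augment, hf.2 v hx hy]
    simp [Ne.symm hx, Ne.symm hy]

variable [Fintype V]

theorem IsUnitFlow.exists_augmentingPath (hf : G.IsUnitFlow x y f)
    (hcut : ∀ S : Set V, x ∈ S → y ∉ S → k ≤ (G.edgeCut S).ncard) (hlt : G.flowOut f {x} < k) :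
    ∃ p : G.Walk x y, p.IsPath ∧ ∀ d ∈ p.darts, |f d.2.1 + G.orient d.2.1 d.1| ≤ 1 := by
  classical
  by_contra hno
  set S := {v | Relation.ReflTransGen
    (fun a b => ∃ e, G.Inc e a b ∧ |f e + G.orient e a| ≤ 1) x v}
  have hyS : y ∉ S := fun hy => hno (Walk.exists_isPath_of_reflTransGen hy)
  -- every edge leaving `S` is saturated, otherwise its far end would be reachable
  have hsat : ∀ e, G.cutSign S e * f e = if e ∈ G.edgeCut S then 1 else 0 := by
    intro e
    split_ifs with he
    · obtain ⟨a, b, hab, ha, hb⟩ := mem_edgeCut_iff.1 he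
      have hres : ¬ |f e + G.orient e a| ≤ 1 := fun h => hb (ha.tail ⟨e, hab, h⟩)
      have := hf.1 e
      rw [cutSign_of_inc hab ha hb]
      rw [abs_le] at this hres
      rcases orient_eq_one_or_neg_one (G := G) e a with h | h <;> rw [h] at hres ⊢ <;> omega
    · rw [cutSign_of_notMem_edgeCut he, zero_mul]
  have hval : G.flowOut f {x} = (G.edgeCut S).ncard := calc
    G.flowOut f {x} = ∑ v with v ∈ S, G.flowOut f {v} :=
      (Finset.sum_eq_single_of_mem x (Finset.mem_filter.2 ⟨Finset.mem_univ x, .refl⟩)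
        fun v hv hvx => hf.2 v hvx fun hvy => hyS (hvy ▸ (Finset.mem_filter.1 hv).2)).symm
    _ = ∑ e, G.cutSign S e * f e := sum_flowOut_singleton f
    _ = (G.edgeCut S).ncard := by simp [hsat, Set.ncard_eq_sum_ite (G.edgeCut S)]
  have := hcut S .refl hyS
  omega

theorem exists_flowPath_of_flowOut_pos (hf : ∀ e, |f e| ≤ 1) {u : V} (hu : 0 < G.flowOut f {u}) :
    ∃ v, G.flowOut f {v} < 0 ∧
      ∃ p : G.Walk u v, p.IsPath ∧ ∀ d ∈ p.darts, f d.2.1 = G.orient d.2.1 d.1 := by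
  classical
  by_contra hno
  set S := {v | Relation.ReflTransGen (fun a b => ∃ e, G.Inc e a b ∧ f e = G.orient e a) u v}
  have hS : ∀ v ∈ S, 0 ≤ G.flowOut f {v} := fun v hv =>
    not_lt.1 fun hneg => hno ⟨v, hneg, Walk.exists_isPath_of_reflTransGen hv⟩
  -- no flow leaves `S`, otherwise its far end would be reachable
  have hin : ∀ e, G.cutSign S e * f e ≤ 0 := by
    intro e
    by_cases he : e ∈ G.edgeCut S
    · obtain ⟨a, b, hab, ha, hb⟩ := mem_edgeCut_iff.1 he
      have hflow : f e ≠ G.orient e a := fun h => hb (ha.tail ⟨e, hab, h⟩)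
      have := hf e
      rw [cutSign_of_inc hab ha hb]
      rw [abs_le] at this
      rcases orient_eq_one_or_neg_one (G := G) e a with h | h <;> rw [h] at hflow ⊢ <;> omega
    · rw [cutSign_of_notMem_edgeCut he, zero_mul]
  have hpos : 0 < G.flowOut f S := calc
    0 < G.flowOut f {u} := hu
    _ ≤ ∑ v with v ∈ S, G.flowOut f {v} :=
      Finset.single_le_sum (fun v hv => hS v (Finset.mem_filter.1 hv).2)
        (Finset.mem_filter.2 ⟨Finset.mem_univ u, .refl⟩)
    _ = G.flowOut f S := sum_flowOut_singleton f
  exact hpos.not_ge (Finset.sum_nonpos fun e _ => hin e)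

theorem exists_isUnitFlow_flowOut_eq (hxy : x ≠ y)
    (hcut : ∀ S : Set V, x ∈ S → y ∉ S → k ≤ (G.edgeCut S).ncard) :
    ∃ f, G.IsUnitFlow x y f ∧ G.flowOut f {x} = k := by
  suffices ∀ j ≤ k, ∃ f, G.IsUnitFlow x y f ∧ G.flowOut f {x} = j from this k le_rfl
  intro j hj
  induction j with
  | zero => exact ⟨0, ⟨by simp, by simp [flowOut]⟩, by simp [flowOut]⟩
  | succ j ih =>
    obtain ⟨f, hf, hval⟩ := ih (by omega)
    obtain ⟨p, hp, hres⟩ := hf.exists_augmentingPath hcut (by omega)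
    refine ⟨p.augment 1 f, hf.augment 1 hp (by simpa using hres), ?_⟩
    rw [Walk.flowOut_augment, hval]
    simp [hxy.symm]

theorem IsUnitFlow.exists_edgeDisjoint_paths (hf : G.IsUnitFlow x y f) (hxy : x ≠ y) {m : ℕ}
    (hval : G.flowOut f {x} = m) :
    ∃ P : Fin m → G.Walk x y, (∀ i, (P i).IsPath ∧ ∀ e ∈ (P i).edges, f e ≠ 0) ∧
      ∀ i j, i ≠ j → (P i).edges.Disjoint (P j).edges := by
  classical
  induction m generalizing f with
  | zero => exact ⟨finZeroElim, finZeroElim, finZeroElim⟩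
  | succ m ih =>
    obtain ⟨v, hv, p, hp, hflow⟩ :=
      exists_flowPath_of_flowOut_pos (G := G) (u := x) hf.1 (by rw [hval]; positivity)
    obtain rfl : v = y := by
      by_contra hvy
      have hvx : v ≠ x := by rintro rfl; omega
      exact hv.ne (hf.2 v hvx hvy)
    have hpf : ∀ e ∈ p.edges, f e ≠ 0 := fun e he =>
      let ⟨a, _, hd⟩ := p.exists_mem_darts_of_mem_edges he
      hflow _ hd ▸ orient_ne_zero e a
    obtain ⟨Q, hQ, hQQ⟩ := ih (hf.augment (-1) hp fun d hd => by simp [hflow d hd])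
      (by rw [Walk.flowOut_augment, hval]; simp [hxy.symm])
    simp only [hp.augment_neg_one_apply hflow, ne_eq, ite_eq_left_iff, not_forall] at hQ
    have hpQ : ∀ i, p.edges.Disjoint (Q i).edges := fun i e hp hq => ((hQ i).2 e hq).1 hp
    refine ⟨Fin.cons p Q, fun i => ?_, fun i j hij => ?_⟩
    · induction i using Fin.cases with
      | zero => exact ⟨hp, hpf⟩
      | succ i => exact ⟨(hQ i).1, fun e he => ((hQ i).2 e he).2⟩
    · induction i using Fin.cases <;> induction j using Fin.cases
      · exact absurd rfl hij
      · exact hpQ _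
      · exact (hpQ _).symm
      · exact hQQ _ _ fun h => hij (congrArg _ h)

end Flow

theorem edgeDisjointPaths_iff [Finite V] [Finite E] (hxy : x ≠ y) :
    G.EdgeDisjointPaths k x y ↔ ∀ S : Set V, x ∈ S → y ∉ S → k ≤ (G.edgeCut S).ncard := by
  refine ⟨fun h S hx hy => h.le_ncard_edgeCut hx hy, fun hcut => ?_⟩
  cases nonempty_fintype V
  cases nonempty_fintype E
  obtain ⟨f, hf, hval⟩ := exists_isUnitFlow_flowOut_eq hxy hcut
  obtain ⟨P, hP, hdisj⟩ := hf.exists_edgeDisjoint_paths hxy hval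
  exact ⟨P, fun i => (hP i).1, hdisj⟩

theorem SEdgeConnected.le_ncard_edgeCut [Finite E] (hconn : G.SEdgeConnected s k)
    (ha : a ∈ S) (hb : b ∉ S) (has : a ≠ s) (hbs : b ≠ s) : k ≤ (G.edgeCut S).ncard :=
  (hconn a b has hbs (ne_of_mem_of_not_mem ha hb)).le_ncard_edgeCut ha hb

theorem sEdgeConnected_iff [Finite V] [Finite E] : G.SEdgeConnected s k ↔
    ∀ S : Set V, s ∉ S → ∀ a ∈ S, ∀ b ∉ S, b ≠ s → k ≤ (G.edgeCut S).ncard := by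
  refine ⟨fun h S hs a ha b hb hbs => h.le_ncard_edgeCut ha hb (ne_of_mem_of_not_mem ha hs) hbs,
    fun h x y hxs hys hxy => (edgeDisjointPaths_iff hxy).2 fun S hx hy => ?_⟩
  by_cases hs : s ∈ S
  · rw [← edgeCut_compl]
    exact h Sᶜ (not_not_intro hs) y hy x (not_not_intro hx) hxs
  · exact h S hs x hx y hy hys

def edgesBetween (G : Multigraph V E) (A B : Set V) : Set E :=
  {e | (G.fst e ∈ A ∧ G.snd e ∈ B) ∨ (G.fst e ∈ B ∧ G.snd e ∈ A)}

section CutIdentities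

variable [Finite E] (G) (X Y : Set V)

theorem ncard_edgeCut_add_ncard_edgeCut :
    (G.edgeCut X).ncard + (G.edgeCut Y).ncard = (G.edgeCut (X ∩ Y)).ncard +
      (G.edgeCut (X ∪ Y)).ncard + 2 * (G.edgesBetween (X \ Y) (Y \ X)).ncard := by
  classical
  cases nonempty_fintype E
  simp only [Set.ncard_eq_sum_ite, Finset.mul_sum, ← Finset.sum_add_distrib]
  refine Finset.sum_congr rfl fun e _ => ?_
  by_cases G.fst e ∈ X <;> by_cases G.snd e ∈ X <;> by_cases G.fst e ∈ Y <;>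
    by_cases G.snd e ∈ Y <;> simp [edgeCut, edgesBetween, *]

theorem ncard_edgeCut_add_ncard_edgeCut_eq_diff :
    (G.edgeCut X).ncard + (G.edgeCut Y).ncard = (G.edgeCut (X \ Y)).ncard +
      (G.edgeCut (Y \ X)).ncard + 2 * (G.edgesBetween (X ∩ Y) (X ∪ Y)ᶜ).ncard := by
  have := G.ncard_edgeCut_add_ncard_edgeCut X Yᶜ
  rw [edgeCut_compl, ← edgeCut_compl (X ∪ Yᶜ)] at this
  convert this using 5 <;> ext <;> simp <;> tauto

theorem ncard_edgeCut_add_ncard_edgeCut_of_disjoint {A B : Set V} (h : Disjoint A B) :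
    (G.edgeCut A).ncard + (G.edgeCut B).ncard =
      (G.edgeCut (A ∪ B)).ncard + 2 * (G.edgesBetween A B).ncard := by
  have := G.ncard_edgeCut_add_ncard_edgeCut A B
  rwa [h.inter_eq, h.sdiff_eq_left, h.sdiff_eq_right, edgeCut_empty, Set.ncard_empty,
    zero_add] at this

end CutIdentities

theorem ncard_edgeCut_insert_add_degree [Finite E] {Z : Set V} (hsZ : s ∉ Z)
    (hZ : ∀ e, G.IncVert s e → G.other s e ∈ Z) :
    (G.edgeCut (insert s Z)).ncard + G.degree s = (G.edgeCut Z).ncard := by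
  classical
  cases nonempty_fintype E
  rw [degree, Set.ncard_eq_sum_ite, Set.ncard_eq_sum_ite, Set.ncard_eq_sum_ite,
    ← Finset.sum_add_distrib]
  refine Finset.sum_congr rfl fun e _ => ?_
  by_cases he : G.IncVert s e
  · have hoZ := hZ e he
    have hos := other_ne he
    rcases inc_other he with ⟨h₁, h₂⟩ | ⟨h₁, h₂⟩ <;> simp [edgeCut, h₁, h₂, hsZ, hoZ, hos, he]
  · have hcut : e ∈ G.edgeCut (insert s Z) ↔ e ∈ G.edgeCut Z := by
      simp only [IncVert, not_or] at he
      simp [edgeCut, he.1, he.2]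
    simp [hcut, he]

def IsDangerous (G : Multigraph V E) (s : V) (k : ℕ) (X : Set V) : Prop :=
  s ∉ X ∧ (∃ b ∉ X, b ≠ s) ∧ (G.edgeCut X).ncard ≤ k + 1

theorem IsDangerous.union [Finite E] (hconn : G.SEdgeConnected s k) (hk : Even k)
    (hdeg : Even (G.degree s)) {X Y : Set V} (hX : G.IsDangerous s k X)
    (hY : G.IsDangerous s k Y) (he : G.IncVert s e) (heX : G.other s e ∈ X)
    (heY : G.other s e ∈ Y) : G.IsDangerous s k (X ∪ Y) := by
  by_cases hXY : X ⊆ Y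
  · rwa [Set.union_eq_self_of_subset_left hXY]
  by_cases hYX : Y ⊆ X
  · rwa [Set.union_eq_self_of_subset_right hYX]
  obtain ⟨hsX, -, hdX⟩ := hX
  obtain ⟨hsY, -, hdY⟩ := hY
  obtain ⟨a, haX, haY⟩ := Set.not_subset.1 hXY
  obtain ⟨c, hcY, hcX⟩ := Set.not_subset.1 hYX
  have hsU : s ∉ X ∪ Y := fun h => h.elim hsX hsY
  have hes := other_ne he
  have has : a ≠ s := ne_of_mem_of_not_mem haX hsX
  have hcs : c ≠ s := ne_of_mem_of_not_mem hcY hsY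
  have hXY := hconn.le_ncard_edgeCut (S := X \ Y) ⟨haX, haY⟩ (fun h => h.2 heY) has hes
  have hYX := hconn.le_ncard_edgeCut (S := Y \ X) ⟨hcY, hcX⟩ (fun h => h.2 heX) hcs hes
  have hXiY := hconn.le_ncard_edgeCut (S := X ∩ Y) ⟨heX, heY⟩ (fun h => haY h.2) hes has
  have hbetween : 0 < (G.edgesBetween (X ∩ Y) (X ∪ Y)ᶜ).ncard := by
    refine (Set.ncard_pos (Set.toFinite _)).2 ⟨e, ?_⟩
    rcases inc_other he with ⟨h₁, h₂⟩ | ⟨h₁, h₂⟩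
    · exact .inr ⟨h₁ ▸ hsU, h₂ ▸ ⟨heX, heY⟩⟩
    · exact .inl ⟨h₁ ▸ ⟨heX, heY⟩, h₂ ▸ hsU⟩
  have hsub := G.ncard_edgeCut_add_ncard_edgeCut X Y
  have hposi := G.ncard_edgeCut_add_ncard_edgeCut_eq_diff X Y
  have hsplit := G.ncard_edgeCut_add_ncard_edgeCut_of_disjoint (Set.disjoint_sdiff_inter (s := X) (t := Y))
  rw [Set.sdiff_union_inter] at hsplit
  -- `hposi` forces `d(X) = d(Y) = k + 1` and `d(X \ Y) = k`; then `hsplit` makes `d(X ∩ Y)` odd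
  -- and `hsub` makes `d(X ∪ Y)` odd
  have hodd : Odd (G.edgeCut (X ∪ Y)).ncard := by
    rw [Nat.odd_iff]
    omega
  refine ⟨hsU, ?_, ?_⟩
  · by_contra! hout
    have hU : (X ∪ Y)ᶜ = {s} := Set.eq_singleton_iff_unique_mem.2 ⟨hsU, hout⟩
    rw [← edgeCut_compl, hU, edgeCut_singleton] at hodd
    exact Nat.not_odd_iff_even.2 hdeg hodd
  · obtain ⟨j, rfl⟩ := hk
    rw [Nat.odd_iff] at hodd
    omega

end General

section Lifting

variable {W F : Type u} {G : Multigraph W F} {s : W} {k : ℕ} {e₁ e₂ : F} {S : Set W}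

instance [Finite F] : Finite (G.lift s e₁ e₂).E :=
  inferInstanceAs (Finite (_ ⊕ _))

open Classical in
theorem ncard_edgeCut_lift_add [Finite F] (h₁ : G.IncVert s e₁) (h₂ : G.IncVert s e₂)
    (hne : e₁ ≠ e₂) (hsS : s ∉ S) :
    ((G.lift s e₁ e₂).graph.edgeCut S).ncard +
      (if G.other s e₁ ∈ S ∧ G.other s e₂ ∈ S then 2 else 0) = (G.edgeCut S).ncard := by
  cases nonempty_fintype F
  have hsplit : ∀ g : F → ℕ, ∑ e, g e =
      ∑ e : {e : F // e ≠ e₁ ∧ e ≠ e₂}, g e + (g e₁ + g e₂) := fun g => by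
    rw [← Fintype.sum_subtype_add_sum_subtype (fun e => e ≠ e₁ ∧ e ≠ e₂) g, ← Finset.sum_pair hne]
    congr 1
    exact (Finset.sum_subtype _ (fun e => by simp; tauto) g).symm
  have hlift : ((G.lift s e₁ e₂).graph.edgeCut S).ncard =
      ∑ x : {e : F // e ≠ e₁ ∧ e ≠ e₂} ⊕ {_p : PUnit.{u + 1} // G.other s e₁ ≠ G.other s e₂},
        if (x : (G.lift s e₁ e₂).E) ∈ (G.lift s e₁ e₂).graph.edgeCut S then 1 else 0 :=
    Set.ncard_eq_sum_ite (α := _ ⊕ _) _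
  have hnew : ∀ p : {_p : PUnit.{u + 1} // G.other s e₁ ≠ G.other s e₂},
      (Sum.inr p : (G.lift s e₁ e₂).E) ∈ (G.lift s e₁ e₂).graph.edgeCut S ↔
        (G.other s e₁ ∈ S ∧ G.other s e₂ ∉ S ∨ G.other s e₁ ∉ S ∧ G.other s e₂ ∈ S) :=
    fun _ => Iff.rfl
  rw [hlift, Set.ncard_eq_sum_ite (G.edgeCut S), hsplit, Fintype.sum_sum_type,
    (inc_other h₁).symm.mem_edgeCut_iff hsS, (inc_other h₂).symm.mem_edgeCut_iff hsS]
  simp only [hnew, Finset.sum_const, Finset.card_univ, smul_eq_mul]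
  change (∑ e : {e : F // e ≠ e₁ ∧ e ≠ e₂}, if e.1 ∈ G.edgeCut S then 1 else 0) + _ + _ = _
  by_cases ho : G.other s e₁ = G.other s e₂ <;> by_cases ha : G.other s e₁ ∈ S <;>
    by_cases hb : G.other s e₂ ∈ S <;> simp [ho, ha, hb]

theorem isLiftable_iff [Finite W] [Finite F] (hconn : G.SEdgeConnected s k)
    (h₁ : G.IncVert s e₁) (h₂ : G.IncVert s e₂) (hne : e₁ ≠ e₂) :
    G.IsLiftable s k e₁ e₂ ↔
      ¬ ∃ X, G.IsDangerous s k X ∧ G.other s e₁ ∈ X ∧ G.other s e₂ ∈ X := by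
  have hlift := fun S (hsS : s ∉ S) => ncard_edgeCut_lift_add (S := S) h₁ h₂ hne hsS
  refine ⟨fun hL ⟨X, ⟨hsX, ⟨b, hbX, hbs⟩, hdX⟩, ho₁, ho₂⟩ => ?_, fun hno => ⟨hne, h₁, h₂, ?_⟩⟩
  · have hk := sEdgeConnected_iff.1 hL.2.2.2 X hsX _ ho₁ b hbX hbs
    have := hlift X hsX
    rw [if_pos ⟨ho₁, ho₂⟩] at this
    omega
  · refine sEdgeConnected_iff.2 fun S hsS a ha b hb hbs => ?_
    have hk := hconn.le_ncard_edgeCut ha hb (ne_of_mem_of_not_mem ha hsS) hbs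
    have := hlift S hsS
    split_ifs at this with hboth
    · have : ¬ (G.edgeCut S).ncard ≤ k + 1 := fun hle =>
        hno ⟨S, ⟨hsS, ⟨b, hb, hbs⟩, hle⟩, hboth⟩
      omega
    · omega

theorem liftingGraph_adj_iff [Finite W] [Finite F] (hconn : G.SEdgeConnected s k)
    {a b : {e : F // G.IncVert s e}} : (G.liftingGraph s k).Adj a b ↔
      a ≠ b ∧ ¬ ∃ X, G.IsDangerous s k X ∧ G.other s a.1 ∈ X ∧ G.other s b.1 ∈ X := by
  rw [liftingGraph, SimpleGraph.fromRel_adj]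
  refine and_congr_right fun hab => ?_
  have hne : a.1 ≠ b.1 := fun h => hab (Subtype.ext h)
  rw [isLiftable_iff hconn a.2 b.2 hne, isLiftable_iff hconn b.2 a.2 hne.symm,
    exists_congr fun X => and_congr_right fun _ => and_comm (a := G.other s b.1 ∈ X), or_self]

theorem liftingGraph_isCompleteMultipartite [Finite W] [Finite F]
    (hconn : G.SEdgeConnected s k) (hk : Even k) (hdeg : Even (G.degree s)) :
    (G.liftingGraph s k).IsCompleteMultipartite := by
  refine ⟨fun a b c hab hbc => ?_⟩
  simp only [liftingGraph_adj_iff hconn, not_and, not_not] at hab hbc ⊢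
  intro hac
  by_cases hab' : a = b
  · exact hab' ▸ hbc (hab' ▸ hac)
  by_cases hbc' : b = c
  · exact hbc' ▸ hab (hbc' ▸ hac)
  obtain ⟨X, hX, haX, hbX⟩ := hab hab'
  obtain ⟨Y, hY, hbY, hcY⟩ := hbc hbc'
  exact ⟨X ∪ Y, hX.union hconn hk hdeg hY b.2 hbX hbY, .inl haX, .inr hcY⟩

theorem exists_isLiftable [Finite W] [Finite F] (hconn : G.SEdgeConnected s k) (hk : Even k)
    (hdeg : Even (G.degree s)) (h2 : 2 ≤ G.degree s) : ∃ e₁ e₂, G.IsLiftable s k e₁ e₂ := by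
  obtain ⟨e₀, e₁, h₀, h₁, hne⟩ := (Set.one_lt_ncard_iff (Set.toFinite _)).1 h2
  by_contra! hno
  have hcover : ∀ e, G.IncVert s e → e ≠ e₀ →
      ∃ X, G.IsDangerous s k X ∧ G.other s e₀ ∈ X ∧ G.other s e ∈ X := fun e he he₀ =>
    not_not.1 ((isLiftable_iff hconn h₀ he (Ne.symm he₀)).not.1 (hno e₀ e))
  have : Nonempty {Z : Set W // G.IsDangerous s k Z ∧ G.other s e₀ ∈ Z} :=
    let ⟨X, hX, h₀X, _⟩ := hcover e₁ h₁ hne.symm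
    ⟨⟨X, hX, h₀X⟩⟩
  -- a largest dangerous set containing `other s e₀` contains every neighbour of `s`
  obtain ⟨⟨Z, hZ, h₀Z⟩, hmax⟩ :=
    Finite.exists_max fun Z : {Z : Set W // G.IsDangerous s k Z ∧ G.other s e₀ ∈ Z} => Z.1.ncard
  have hall : ∀ e, G.IncVert s e → G.other s e ∈ Z := by
    intro e he
    by_cases he₀ : e = e₀
    · exact he₀ ▸ h₀Z
    obtain ⟨Y, hY, h₀Y, heY⟩ := hcover e he he₀
    have hU := hZ.union hconn hk hdeg hY h₀ h₀Z h₀Y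
    have := Set.eq_of_subset_of_ncard_le Set.subset_union_left (hmax ⟨Z ∪ Y, hU, .inl h₀Z⟩)
    exact this ▸ Set.mem_union_right Z heY
  obtain ⟨hsZ, ⟨b, hbZ, hbs⟩, hdZ⟩ := hZ
  have := ncard_edgeCut_insert_add_degree hsZ hall
  have := hconn.le_ncard_edgeCut (S := insert s Z) (.inr h₀Z) (by simp [hbs, hbZ])
    (other_ne h₀) hbs
  omega

end Lifting

end Multigraph

theorem liftingGraph_completeMultipartite_general {V E : Type} [Finite V] [Finite E]
    (G : Multigraph V E) (s : V) (k : ℕ) (hkeven : Even k)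
    (hconn : G.SEdgeConnected s k) (hdeg : Even (G.degree s)) :
    (∃ (ι : Type) (c : {e : E // G.IncVert s e} → ι),
      ∀ a b, (G.liftingGraph s k).Adj a b ↔ c a ≠ c b) ∧
    (2 ≤ G.degree s → ¬ (G.liftingGraph s k)ᶜ.Connected) := by
  have hL := G.liftingGraph_isCompleteMultipartite hconn hkeven hdeg
  refine ⟨hL.exists_adj_iff_ne, fun h2 => hL.not_connected_compl ?_⟩
  obtain ⟨e₁, e₂, h⟩ := G.exists_isLiftable hconn hkeven hdeg h2
  exact ⟨⟨e₁, h.2.1⟩, ⟨e₂, h.2.2.1⟩,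
    (SimpleGraph.fromRel_adj _ _ _).2 ⟨fun h' => h.1 (congrArg Subtype.val h'), .inl h⟩⟩

/-- Jordán; Ok–Richter–Thomassen. Let `k` be an even positive integer
and let `G` be a finite `(s,k)`-edge-connected graph in which `deg(s)` is even. Then the
lifting graph `L(G, s, k)` is a complete multipartite graph; in particular its complement
is disconnected (provided `deg(s) ≥ 2`). -/
theorem liftingGraph_completeMultipartite {V E : Type} [Finite V] [Finite E]
    (G : Multigraph V E) (s : V) (k : ℕ) (hk : 0 < k) (hkeven : Even k)
    (hconn : G.SEdgeConnected s k) (hdeg : Even (G.degree s)) :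
    (∃ (ι : Type) (c : {e : E // G.IncVert s e} → ι),
      ∀ a b, (G.liftingGraph s k).Adj a b ↔ c a ≠ c b) ∧
    (2 ≤ G.degree s → ¬ (G.liftingGraph s k)ᶜ.Connected) :=
  liftingGraph_completeMultipartite_general G s k hkeven hconn hdeg
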